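/- (Combined deterministic form of Lemma 6.) Let E be a real Hilbert space, φ : E → ℝ differentiable with ∇φ Lipschitz with constant L > 0, r : E → ℝ convex, 0 < η ≤ 1/(2L), and w, d ∈ E. Suppose w⁺ minimizes u ↦ (1/(2η))‖u − (w − ηd)‖² + r(u) over E, and b minimizes u ↦ (1/(2η))‖u − (w − η∇φ(w))‖² + r(u) over E; define the proximal gradient mapping 𝒢_η(w) := (w − b)/η. Then (η/8)‖𝒢_η(w)‖² ≤ (φ(w) + r(w)) − (φ(w⁺) + r(w⁺)) + (3η/4)‖∇φ(w) − d‖². -/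

import Mathlib

/-!
A proximal point `p` of `v` satisfies the variational inequality
`⟪v - p, u - p⟫ ≤ η (r u - r p)` for every `u`. Tested at `w`, together with the descent lemma
for `φ` and `η L ≤ 1/2`, it gives the sufficient decrease
`(3/4) ‖w - w⁺‖² - η ‖∇φ w - d‖ ‖w - w⁺‖ ≤ η (F w - F w⁺)`. Summed for two proximal points it
makes the proximal map nonexpansive, so `‖w⁺ - b‖ ≤ η ‖∇φ w - d‖` and hence
`‖w - b‖ ≤ ‖w - w⁺‖ + η ‖∇φ w - d‖`; completing the square in these two bounds gives the claim.
-/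

open scoped RealInnerProductSpace
open Set Filter Topology

section
variable {E : Type*} [NormedAddCommGroup E] [InnerProductSpace ℝ E]

def IsProxPoint (η : ℝ) (r : E → ℝ) (v p : E) : Prop :=
  ∀ u, 1 / (2 * η) * ‖p - v‖ ^ 2 + r p ≤ 1 / (2 * η) * ‖u - v‖ ^ 2 + r u

namespace IsProxPoint

variable {η : ℝ} {r : E → ℝ} {v p : E}

theorem inner_le (hr : ConvexOn ℝ univ r) (hη : 0 < η) (hp : IsProxPoint η r v p) (u : E) :
    ⟪v - p, u - p⟫ ≤ η * (r u - r p) := by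
  set A := η * (r u - r p) - ⟪v - p, u - p⟫
  -- compare `p` with the points `p + l • (u - p)` of the segment towards `u` and let `l → 0⁺`
  have hsegment : ∀ l ∈ Ioo (0 : ℝ) 1, 0 ≤ A + l / 2 * ‖u - p‖ ^ 2 := by
    rintro l ⟨hl0, hl1⟩
    have hnorm : ‖p + l • (u - p) - v‖ ^ 2
        = ‖p - v‖ ^ 2 - 2 * l * ⟪v - p, u - p⟫ + l ^ 2 * ‖u - p‖ ^ 2 := by
      rw [show p + l • (u - p) - v = (p - v) + l • (u - p) by abel, norm_add_sq_real,
        real_inner_smul_right, norm_smul, Real.norm_of_nonneg hl0.le, ← neg_sub v p,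
        inner_neg_left]
      ring
    have hconv : r (p + l • (u - p)) ≤ (1 - l) * r p + l * r u := by
      have := hr.2 (mem_univ p) (mem_univ u) (sub_nonneg.2 hl1.le) hl0.le (sub_add_cancel 1 l)
      rwa [show (1 - l) • p + l • u = p + l • (u - p) by module, smul_eq_mul, smul_eq_mul] at this
    have hmin := hp (p + l • (u - p))
    rw [hnorm] at hmin
    have hη' : 1 / (2 * η) * (2 * η) = 1 := by field_simp
    have : 0 ≤ l * (A + l / 2 * ‖u - p‖ ^ 2) := by
      nlinarith
    exact nonneg_of_mul_nonneg_right (by linarith) hl0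
  have hlim : Tendsto (fun l : ℝ ↦ A + l / 2 * ‖u - p‖ ^ 2) (𝓝[>] 0) (𝓝 A) := by
    refine tendsto_nhdsWithin_of_tendsto_nhds ?_
    simpa using ((continuous_id.div_const 2).mul continuous_const).const_add A |>.tendsto 0
  exact sub_nonneg.1 (ge_of_tendsto hlim (eventually_of_mem (Ioo_mem_nhdsGT one_pos) hsegment))

theorem norm_sub_le (hr : ConvexOn ℝ univ r) (hη : 0 < η) {v' q : E}
    (hp : IsProxPoint η r v p) (hq : IsProxPoint η r v' q) : ‖p - q‖ ≤ ‖v - v'‖ := by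
  have h₁ := hp.inner_le hr hη q
  have h₂ := hq.inner_le hr hη p
  have hmono : ‖p - q‖ ^ 2 ≤ ⟪v - v', p - q⟫ := by
    have : ⟪v - p, q - p⟫ + ⟪v' - q, p - q⟫ = ‖p - q‖ ^ 2 - ⟪v - v', p - q⟫ := by
      rw [← real_inner_self_eq_norm_sq]
      simp only [inner_sub_left, inner_sub_right, real_inner_comm]
      ring
    linarith
  have hcs := real_inner_le_norm (v - v') (p - q)
  nlinarith [norm_nonneg (p - q), norm_nonneg (v - v')]

end IsProxPoint

variable [CompleteSpace E]

theorem le_add_inner_gradient_add_sq_of_lipschitz_gradient {φ : E → ℝ} {L : ℝ}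
    (hφ : Differentiable ℝ φ)
    (hLip : ∀ x y : E, ‖gradient φ x - gradient φ y‖ ≤ L * ‖x - y‖) (x y : E) :
    φ y ≤ φ x + ⟪gradient φ x, y - x⟫ + L / 2 * ‖y - x‖ ^ 2 := by
  set γ : ℝ → E := fun t ↦ x + t • (y - x)
  have hγ : ∀ t, HasDerivAt γ (y - x) t := fun t ↦ by
    simpa only [id, one_smul] using ((hasDerivAt_id t).smul_const (y - x)).const_add x
  have hφγ : ∀ t, HasDerivAt (φ ∘ γ) ⟪gradient φ (γ t), y - x⟫ t := fun t ↦ by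
    simpa using (hφ (γ t)).hasGradientAt.hasFDerivAt.comp_hasDerivAt t (hγ t)
  set B : ℝ → ℝ := fun t ↦ φ x + t * ⟪gradient φ x, y - x⟫ + L / 2 * t ^ 2 * ‖y - x‖ ^ 2
  have hB : ∀ t, HasDerivAt B (⟪gradient φ x, y - x⟫ + L * t * ‖y - x‖ ^ 2) t := fun t ↦
    ((((hasDerivAt_id t).mul_const ⟪gradient φ x, y - x⟫).const_add (φ x)).add
      (((hasDerivAt_pow 2 t).const_mul (L / 2)).mul_const (‖y - x‖ ^ 2))).congr_deriv
      (by push_cast; ring)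
  have hslope : ∀ t ∈ Ico (0 : ℝ) 1,
      ⟪gradient φ (γ t), y - x⟫ ≤ ⟪gradient φ x, y - x⟫ + L * t * ‖y - x‖ ^ 2 := by
    intro t ht
    have hdist : ‖γ t - x‖ = t * ‖y - x‖ := by
      simp [γ, norm_smul, abs_of_nonneg ht.1]
    calc ⟪gradient φ (γ t), y - x⟫
        = ⟪gradient φ x, y - x⟫ + ⟪gradient φ (γ t) - gradient φ x, y - x⟫ := by
          rw [inner_sub_left]; ring
      _ ≤ ⟪gradient φ x, y - x⟫ + L * ‖γ t - x‖ * ‖y - x‖ := by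
          gcongr
          exact (real_inner_le_norm _ _).trans
            (mul_le_mul_of_nonneg_right (hLip _ _) (norm_nonneg _))
      _ = ⟪gradient φ x, y - x⟫ + L * t * ‖y - x‖ ^ 2 := by rw [hdist]; ring
  have key := image_le_of_deriv_right_le_deriv_boundary
    (fun t _ ↦ (hφγ t).continuousAt.continuousWithinAt) (fun t _ ↦ (hφγ t).hasDerivWithinAt)
    (by simp [γ, B]) (fun t _ ↦ (hB t).continuousAt.continuousWithinAt)
    (fun t _ ↦ (hB t).hasDerivWithinAt) hslope (right_mem_Icc.2 zero_le_one)
  simpa [γ, B] using key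

theorem IsProxPoint.sufficient_decrease {φ : E → ℝ} {L : ℝ} {r : E → ℝ} {η : ℝ}
    (hφ : Differentiable ℝ φ)
    (hLip : ∀ x y : E, ‖gradient φ x - gradient φ y‖ ≤ L * ‖x - y‖)
    (hr : ConvexOn ℝ univ r) (hη : 0 < η) {w d wplus : E}
    (hmin : IsProxPoint η r (w - η • d) wplus) :
    (1 - η * L / 2) * ‖w - wplus‖ ^ 2
      ≤ η * ((φ w + r w) - (φ wplus + r wplus)) + η * ⟪d - gradient φ w, w - wplus⟫ := by
  have hdesc := le_add_inner_gradient_add_sq_of_lipschitz_gradient hφ hLip w wplus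
  have hvi := hmin.inner_le hr hη w
  rw [show w - η • d - wplus = (w - wplus) - η • d by abel, inner_sub_left,
    real_inner_self_eq_norm_sq, real_inner_smul_left] at hvi
  rw [← neg_sub w wplus, inner_neg_right, norm_neg] at hdesc
  have hsplit : η * ⟪d - gradient φ w, w - wplus⟫
      = η * ⟪d, w - wplus⟫ - η * ⟪gradient φ w, w - wplus⟫ := by
    rw [inner_sub_left]; ring
  nlinarith

end

theorem prox_step_stationarity_general (E : Type*) [NormedAddCommGroup E]
    [InnerProductSpace ℝ E] [CompleteSpace E]
    (φ : E → ℝ) (L : ℝ) (hφ : Differentiable ℝ φ)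
    (hLip : ∀ x y : E, ‖gradient φ x - gradient φ y‖ ≤ L * ‖x - y‖)
    (r : E → ℝ) (hr : ConvexOn ℝ Set.univ r)
    (η : ℝ) (hη0 : 0 < η) (hη : η ≤ 1 / (2 * L))
    (w d wplus b : E)
    (hmin : ∀ u : E,
      (1 / (2 * η)) * ‖wplus - (w - η • d)‖ ^ 2 + r wplus
        ≤ (1 / (2 * η)) * ‖u - (w - η • d)‖ ^ 2 + r u)
    (hb : ∀ u : E,
      (1 / (2 * η)) * ‖b - (w - η • gradient φ w)‖ ^ 2 + r b
        ≤ (1 / (2 * η)) * ‖u - (w - η • gradient φ w)‖ ^ 2 + r u) :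
    (η / 8) * ‖(1 / η) • (w - b)‖ ^ 2
      ≤ (φ w + r w) - (φ wplus + r wplus)
        + (3 * η / 4) * ‖gradient φ w - d‖ ^ 2 := by
  have hηL : η * L ≤ 1 / 2 := by
    rcases le_or_gt L 0 with hL | hL
    · nlinarith
    · rw [le_div_iff₀ (by positivity)] at hη; linarith
  have hdec := IsProxPoint.sufficient_decrease hφ hLip hr hη0 hmin
  have hcs : ⟪d - gradient φ w, w - wplus⟫ ≤ ‖gradient φ w - d‖ * ‖w - wplus‖ :=
    norm_sub_rev d (gradient φ w) ▸ real_inner_le_norm _ _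
  have hnonexp : ‖wplus - b‖ ≤ η * ‖gradient φ w - d‖ := by
    have := IsProxPoint.norm_sub_le hr hη0 hmin hb
    rwa [sub_sub_sub_cancel_left, ← smul_sub, norm_smul, Real.norm_of_nonneg hη0.le] at this
  have htri : ‖w - b‖ ≤ ‖w - wplus‖ + η * ‖gradient φ w - d‖ :=
    (norm_sub_le_norm_sub_add_norm_sub w wplus b).trans (by gcongr)
  rw [norm_smul, Real.norm_of_nonneg (by positivity), mul_pow,
    show η / 8 * ((1 / η) ^ 2 * ‖w - b‖ ^ 2) = ‖w - b‖ ^ 2 / (8 * η) by field_simp,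
    div_le_iff₀ (by positivity)]
  have hsq : ‖w - b‖ ^ 2 ≤ (‖w - wplus‖ + η * ‖gradient φ w - d‖) ^ 2 :=
    pow_le_pow_left₀ (norm_nonneg _) htri 2
  -- `(‖w - w⁺‖ - η ‖∇φ w - d‖)² ≥ 0` absorbs the cross term of the sufficient decrease
  nlinarith [mul_le_mul_of_nonneg_left hcs hη0.le, norm_nonneg (w - wplus),
    sq_nonneg (‖w - wplus‖ - η * ‖gradient φ w - d‖)]

/-- Combined deterministic form of Lemma 6: for `0 < η ≤ 1/(2L)`, a proximal
step `w⁺` along the estimator `d` satisfies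
`(η/8)‖𝒢_η(w)‖² ≤ (φ(w)+r(w)) − (φ(w⁺)+r(w⁺)) + (3η/4)‖∇φ(w) − d‖²`,
where `𝒢_η(w) = (w − b)/η` is the exact proximal gradient mapping. -/
theorem prox_step_stationarity (E : Type*) [NormedAddCommGroup E]
    [InnerProductSpace ℝ E] [CompleteSpace E]
    (φ : E → ℝ) (L : ℝ) (hL : 0 < L) (hφ : Differentiable ℝ φ)
    (hLip : ∀ x y : E, ‖gradient φ x - gradient φ y‖ ≤ L * ‖x - y‖)
    (r : E → ℝ) (hr : ConvexOn ℝ Set.univ r)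
    (η : ℝ) (hη0 : 0 < η) (hη : η ≤ 1 / (2 * L))
    (w d wplus b : E)
    (hmin : ∀ u : E,
      (1 / (2 * η)) * ‖wplus - (w - η • d)‖ ^ 2 + r wplus
        ≤ (1 / (2 * η)) * ‖u - (w - η • d)‖ ^ 2 + r u)
    (hb : ∀ u : E,
      (1 / (2 * η)) * ‖b - (w - η • gradient φ w)‖ ^ 2 + r b
        ≤ (1 / (2 * η)) * ‖u - (w - η • gradient φ w)‖ ^ 2 + r u) :
    (η / 8) * ‖(1 / η) • (w - b)‖ ^ 2
      ≤ (φ w + r w) - (φ wplus + r wplus)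
        + (3 * η / 4) * ‖gradient φ w - d‖ ^ 2 :=
  prox_step_stationarity_general E φ L hφ hLip r hr η hη0 hη w d wplus b hmin hb
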